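/- For any a ≥ 2, writing α = ⌈log₂ a⌉ − 1, we have Λ(a) = Λ(2^α) + Λ(a − 2^α) + (a − 2^α). -/

import Mathlib

/-- `U` induces a disjoint union of chains such that any two elements belonging to different
chains are incomparable; equivalently, comparability restricted to `U` is transitive
(so the comparability graph induced on `U` is a vertex-disjoint union of cliques). -/
def IsChainUnion {α : Type*} [PartialOrder α] (U : Finset α) : Prop :=
  ∀ x ∈ U, ∀ y ∈ U, ∀ z ∈ U,
    (x ≤ y ∨ y ≤ x) → (y ≤ z ∨ z ≤ y) → (x ≤ z ∨ z ≤ x)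

/-- `ao α`: the maximum cardinality of a subset of the finite poset `α` that is a
disjoint union of chains with elements of different chains incomparable. -/
noncomputable def ao (α : Type*) [Fintype α] [PartialOrder α] : ℕ :=
  sSup {m | ∃ U : Finset α, IsChainUnion U ∧ U.card = m}

/-- The height of a finite poset: the maximum size of a chain. -/
noncomputable def heightP (α : Type*) [Fintype α] [PartialOrder α] : ℕ :=
  sSup {m | ∃ C : Finset α, IsChain (· ≤ ·) (↑C : Set α) ∧ C.card = m}

/-- The width of a finite poset: the maximum size of an antichain. -/
noncomputable def widthP (α : Type*) [Fintype α] [PartialOrder α] : ℕ :=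
  sSup {m | ∃ A : Finset α, IsAntichain (· ≤ ·) (↑A : Set α) ∧ A.card = m}

/-- The cover graph of a poset: `x` and `y` are adjacent iff one covers the other. -/
def coverGraph (α : Type*) [PartialOrder α] : SimpleGraph α where
  Adj x y := x ⋖ y ∨ y ⋖ x
  symm := ⟨fun x y h => h.symm⟩
  loopless := ⟨fun x h => by rcases h with h | h <;> exact absurd h.lt (lt_irrefl x)⟩

/-- A poset is acyclic if its cover graph has no cycles. -/
def AcyclicPoset (α : Type*) [PartialOrder α] : Prop := (coverGraph α).IsAcyclic

/-- A poset is connected if its cover graph is connected. -/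
def ConnectedPoset (α : Type*) [PartialOrder α] : Prop := (coverGraph α).Connected

/-- A poset is `N`-free if there are no `p1, p2, p3, p4` with `p1 > p3`, `p1 > p4`, `p2 > p4`,
`p1 ∦ p2`, `p2 ∦ p3`, `p3 ∦ p4`. -/
def NFree (α : Type*) [PartialOrder α] : Prop :=
  ¬ ∃ p1 p2 p3 p4 : α, p3 < p1 ∧ p4 < p1 ∧ p4 < p2 ∧
      ¬(p1 ≤ p2 ∨ p2 ≤ p1) ∧ ¬(p2 ≤ p3 ∨ p3 ≤ p2) ∧ ¬(p3 ≤ p4 ∨ p4 ≤ p3)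

/-- A poset is `V`-free if there are no `p1 < p2`, `p1 < p3` with `p2` incomparable to `p3`. -/
def VFree (α : Type*) [PartialOrder α] : Prop :=
  ¬ ∃ p1 p2 p3 : α, p1 < p2 ∧ p1 < p3 ∧ ¬(p2 ≤ p3 ∨ p3 ≤ p2)

/-- `ao` of the family `T_n` of all acyclic posets on `n` elements:
the minimum of `ao P` over acyclic posets `P` of size `n`. -/
noncomputable def aoT (n : ℕ) : ℕ :=
  sInf {m | ∃ P : PartialOrder (Fin n),
    @AcyclicPoset (Fin n) P ∧ @ao (Fin n) (Fin.fintype n) P = m}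

/-- `Λ(a, h)`: the maximum cardinality of a `V`-free poset `P` with `ao P = a` and
height at most `h`. -/
noncomputable def Lam (a h : ℕ) : ℕ :=
  sSup {n | ∃ P : PartialOrder (Fin n), @VFree (Fin n) P ∧
    @ao (Fin n) (Fin.fintype n) P = a ∧ @heightP (Fin n) (Fin.fintype n) P ≤ h}

/-- `Λ(a) = Λ(a, a)`. -/
noncomputable def Lambda (a : ℕ) : ℕ := Lam a a

/-- `X(a)`: the maximum cardinality of an acyclic and `N`-free poset `P` with `ao P = a`. -/
noncomputable def Xmax (a : ℕ) : ℕ :=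
  sSup {n | ∃ P : PartialOrder (Fin n), @AcyclicPoset (Fin n) P ∧
    @NFree (Fin n) P ∧ @ao (Fin n) (Fin.fintype n) P = a}

/-!
Write `C(n)` (`onesBelow n`) for the total number of ones in the binary expansions of
`0, …, n - 1`. We show `Λ(a) = a + C(a)`; the theorem is then the identity
`C(2^t + q) = C(2^t) + C(q) + q` for `q ≤ 2^t`.

Upper bound: let `m` be maximal in a V-free poset `P`. Elements below `m` are incomparable to the
elements not below `m`, so either `m` is the top of `P` and removing it lowers the height by one,
or `P` splits into two mutually incomparable V-free pieces whose values of `ao` add up. Induction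
with the superadditivity `C(a) + C(b) + min a b ≤ C(a + b)` gives `|P| ≤ C(ao P) + h(P)`, and
`h(P) ≤ ao P`.

Lower bound: a chain of `⌊a/2⌋` elements above the disjoint union of extremal posets for `⌈a/2⌉`
and `⌊a/2⌋` has `ao = a`, height at most `a`, and `a + C(a)` elements, since
`C(a) = C(⌈a/2⌉) + C(⌊a/2⌋) + ⌊a/2⌋`.
-/

open Finset

def onesBelow (n : ℕ) : ℕ := ∑ k ∈ range n, (Nat.digits 2 k).sum

section onesBelow

theorem digits_two_sum_two_mul (k : ℕ) :
    (Nat.digits 2 (2 * k)).sum = (Nat.digits 2 k).sum := by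
  rcases Nat.eq_zero_or_pos k with rfl | hk
  · simp
  · rw [Nat.digits_def' (by norm_num) (by omega)]
    simp

theorem digits_two_sum_two_mul_add_one (k : ℕ) :
    (Nat.digits 2 (2 * k + 1)).sum = (Nat.digits 2 k).sum + 1 := by
  rw [Nat.digits_def' (by norm_num) (by omega), List.sum_cons, show (2 * k + 1) % 2 = 1 by omega,
    show (2 * k + 1) / 2 = k by omega, add_comm]

theorem onesBelow_succ (n : ℕ) : onesBelow (n + 1) = onesBelow n + (Nat.digits 2 n).sum :=
  sum_range_succ _ _

theorem onesBelow_mono : Monotone onesBelow :=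
  fun _ _ h => sum_le_sum_of_subset (range_subset_range.2 h)

theorem onesBelow_two_mul (d : ℕ) : onesBelow (2 * d) = 2 * onesBelow d + d := by
  induction d with
  | zero => simp [onesBelow]
  | succ d ih =>
    rw [show 2 * (d + 1) = 2 * d + 1 + 1 by ring, onesBelow_succ, onesBelow_succ, ih,
      digits_two_sum_two_mul_add_one, digits_two_sum_two_mul, onesBelow_succ]
    ring

theorem onesBelow_eq_halves (n : ℕ) :
    onesBelow n = onesBelow ((n + 1) / 2) + onesBelow (n / 2) + n / 2 := by
  obtain ⟨d, rfl | rfl⟩ := Nat.even_or_odd' n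
  · rw [show (2 * d + 1) / 2 = d by omega, show 2 * d / 2 = d by omega, onesBelow_two_mul]
    ring
  · rw [show (2 * d + 1 + 1) / 2 = d + 1 by omega, show (2 * d + 1) / 2 = d by omega,
      onesBelow_succ, onesBelow_two_mul, digits_two_sum_two_mul, onesBelow_succ]
    ring

theorem onesBelow_add_min_le (a b : ℕ) :
    onesBelow a + onesBelow b + min a b ≤ onesBelow (a + b) := by
  induction hn : a + b using Nat.strong_induction_on generalizing a b with
  | _ n ih =>
  rcases Nat.eq_zero_or_pos a with rfl | ha
  · simp [onesBelow, ← hn]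
  rcases Nat.eq_zero_or_pos b with rfl | hb
  · simp [onesBelow, ← hn]
  rw [onesBelow_eq_halves a, onesBelow_eq_halves b, onesBelow_eq_halves n]
  by_cases hodd : a % 2 = 1 ∧ b % 2 = 1
  · -- both odd: pair the larger half of each summand with the smaller half of the other
    have h₁ := ih _ (by omega) ((a + 1) / 2) (b / 2) rfl
    have h₂ := ih _ (by omega) (a / 2) ((b + 1) / 2) rfl
    rw [show (n + 1) / 2 = (a + 1) / 2 + b / 2 by omega, show n / 2 = a / 2 + (b + 1) / 2 by omega]
    omega
  · have h₁ := ih _ (by omega) ((a + 1) / 2) ((b + 1) / 2) rfl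
    have h₂ := ih _ (by omega) (a / 2) (b / 2) rfl
    rw [show (n + 1) / 2 = (a + 1) / 2 + (b + 1) / 2 by omega, show n / 2 = a / 2 + b / 2 by omega]
    omega

theorem onesBelow_two_pow_add (t : ℕ) {q : ℕ} (hq : q ≤ 2 ^ t) :
    onesBelow (2 ^ t + q) = onesBelow (2 ^ t) + onesBelow q + q := by
  induction t generalizing q with
  | zero =>
    interval_cases q <;> simp [onesBelow, sum_range_succ]
  | succ t ih =>
    have hpow : 2 ^ (t + 1) = 2 * 2 ^ t := by ring
    have h₁ := ih (q := (q + 1) / 2) (by omega)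
    have h₂ := ih (q := q / 2) (by omega)
    rw [onesBelow_eq_halves (2 ^ (t + 1) + q), onesBelow_eq_halves (2 ^ (t + 1)),
      onesBelow_eq_halves q,
      show (2 ^ (t + 1) + q + 1) / 2 = 2 ^ t + (q + 1) / 2 by omega,
      show (2 ^ (t + 1) + q) / 2 = 2 ^ t + q / 2 by omega,
      show (2 ^ (t + 1) + 1) / 2 = 2 ^ t by omega, show 2 ^ (t + 1) / 2 = 2 ^ t by omega]
    omega

end onesBelow

section CardSup

variable {α : Type*} {P : Finset α → Prop}

theorem csSup_card_le {n : ℕ} (h : ∀ s, P s → #s ≤ n) : sSup {m | ∃ t, P t ∧ #t = m} ≤ n :=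
  csSup_le' (by rintro _ ⟨s, hs, rfl⟩; exact h s hs)

variable [Fintype α]

theorem bddAbove_card_set : BddAbove {m | ∃ s, P s ∧ #s = m} :=
  ⟨Fintype.card α, by rintro _ ⟨s, -, rfl⟩; exact card_le_univ s⟩

theorem card_le_csSup_card {s : Finset α} (hs : P s) : #s ≤ sSup {m | ∃ t, P t ∧ #t = m} :=
  le_csSup bddAbove_card_set ⟨s, hs, rfl⟩

theorem exists_card_eq_csSup_card (h : P ∅) : ∃ s, P s ∧ #s = sSup {m | ∃ t, P t ∧ #t = m} :=
  Nat.sSup_mem (s := {m | ∃ t, P t ∧ #t = m}) ⟨0, ∅, h, rfl⟩ bddAbove_card_set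

end CardSup

section ChainUnion

variable {α β : Type*} [PartialOrder α] [PartialOrder β]

theorem IsChainUnion.mono {U V : Finset α} (hV : IsChainUnion V) (hUV : U ⊆ V) :
    IsChainUnion U :=
  fun x hx y hy z hz => hV x (hUV hx) y (hUV hy) z (hUV hz)

theorem isChainUnion_empty : IsChainUnion (∅ : Finset α) := by
  simp [IsChainUnion]

theorem isChainUnion_map_iff (f : α ↪o β) {U : Finset α} :
    IsChainUnion (U.map f.toEmbedding) ↔ IsChainUnion U := by
  simp [IsChainUnion]

theorem IsChain.isChainUnion {C : Finset α} (hC : IsChain (· ≤ ·) (C : Set α)) :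
    IsChainUnion C := by
  intro x hx _ _ z hz _ _
  exact hC.total hx hz

theorem IsChainUnion.isChain_of_comparable {U : Finset α} (hU : IsChainUnion U) {y : α}
    (hy : y ∈ U) (h : ∀ x ∈ U, x ≤ y ∨ y ≤ x) : IsChain (· ≤ ·) (U : Set α) :=
  fun x hx z hz _ => hU x hx y hy z hz (h x hx) ((h z hz).symm)

theorem isChainUnion_disjSum_iff {s : Finset α} {t : Finset β} :
    IsChainUnion (s.disjSum t) ↔ IsChainUnion s ∧ IsChainUnion t := by
  refine ⟨fun h => ⟨fun x hx y hy z hz hxy hyz => ?_, fun x hx y hy z hz hxy hyz => ?_⟩, ?_⟩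
  · simpa using h (.inl x) (by simpa) (.inl y) (by simpa) (.inl z) (by simpa) (by simpa) (by simpa)
  · simpa using h (.inr x) (by simpa) (.inr y) (by simpa) (.inr z) (by simpa) (by simpa) (by simpa)
  · rintro ⟨hs, ht⟩ (x | x) hx (y | y) hy (z | z) hz hxy hyz <;> simp_all
    · exact hs x hx y hy z hz hxy hyz
    · exact ht x hx y hy z hz hxy hyz

end ChainUnion

section Order

variable {α β : Type*} [PartialOrder α] [PartialOrder β]

theorem vFree_of_linearOrder {γ : Type*} [LinearOrder γ] : VFree γ :=
  fun ⟨_, p₂, p₃, _, _, h⟩ => h (le_total p₂ p₃)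

theorem VFree.of_orderEmbedding (hV : VFree β) (f : α ↪o β) : VFree α :=
  fun ⟨p₁, p₂, p₃, h₁₂, h₁₃, h⟩ =>
    hV ⟨f p₁, f p₂, f p₃, by simpa, by simpa, by simpa [not_or] using h⟩

theorem VFree.sum (hα : VFree α) (hβ : VFree β) : VFree (α ⊕ β) := by
  rintro ⟨p₁ | p₁, p₂ | p₂, p₃ | p₃, h₁₂, h₁₃, h⟩ <;> simp_all
  · exact hα ⟨p₁, p₂, p₃, h₁₂, h₁₃, by simpa using h⟩
  · exact hβ ⟨p₁, p₂, p₃, h₁₂, h₁₃, by simpa using h⟩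

theorem VFree.not_comparable_of_isMax (hV : VFree α) {m x y : α} (hm : IsMax m) (hx : x ≤ m)
    (hy : ¬y ≤ m) : ¬(x ≤ y ∨ y ≤ x) := by
  rintro (hxy | hyx)
  · have hmy : ¬m ≤ y := fun h => hy (hm h)
    exact hV ⟨x, y, m, hxy.lt_of_ne (by rintro rfl; exact hy hx),
      hx.lt_of_ne (by rintro rfl; exact hmy hxy), by tauto⟩
  · exact hy (hyx.trans hx)

end Order

section AoHeight

variable {α β : Type*} [Fintype α] [PartialOrder α] [Fintype β] [PartialOrder β]

theorem card_le_ao {U : Finset α} (hU : IsChainUnion U) : #U ≤ ao α :=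
  card_le_csSup_card hU

theorem ao_le {n : ℕ} (h : ∀ U : Finset α, IsChainUnion U → #U ≤ n) : ao α ≤ n :=
  csSup_card_le h

theorem exists_isChainUnion_card_eq_ao : ∃ U : Finset α, IsChainUnion U ∧ #U = ao α :=
  exists_card_eq_csSup_card isChainUnion_empty

theorem card_le_heightP {C : Finset α} (hC : IsChain (· ≤ ·) (C : Set α)) : #C ≤ heightP α :=
  card_le_csSup_card hC

theorem heightP_le {n : ℕ} (h : ∀ C : Finset α, IsChain (· ≤ ·) (C : Set α) → #C ≤ n) :
    heightP α ≤ n :=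
  csSup_card_le h

theorem exists_isChain_card_eq_heightP :
    ∃ C : Finset α, IsChain (· ≤ ·) (C : Set α) ∧ #C = heightP α :=
  exists_card_eq_csSup_card (by simp)

theorem heightP_le_ao : heightP α ≤ ao α :=
  heightP_le fun _ hC => card_le_ao hC.isChainUnion

theorem heightP_le_card : heightP α ≤ Fintype.card α :=
  heightP_le fun C _ => card_le_univ C

theorem ao_le_of_orderEmbedding (f : α ↪o β) : ao α ≤ ao β :=
  ao_le fun U hU => by
    simpa using card_le_ao ((isChainUnion_map_iff f).2 hU)

theorem heightP_le_of_orderEmbedding (f : α ↪o β) : heightP α ≤ heightP β :=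
  heightP_le fun C hC => by
    simpa using card_le_heightP (C := C.map f.toEmbedding) (by simpa using hC.image f)

theorem ao_congr (e : α ≃o β) : ao α = ao β :=
  (ao_le_of_orderEmbedding e.toOrderEmbedding).antisymm
    (ao_le_of_orderEmbedding e.symm.toOrderEmbedding)

theorem heightP_congr (e : α ≃o β) : heightP α = heightP β :=
  (heightP_le_of_orderEmbedding e.toOrderEmbedding).antisymm
    (heightP_le_of_orderEmbedding e.symm.toOrderEmbedding)

theorem ao_eq_card {γ : Type*} [Fintype γ] [LinearOrder γ] : ao γ = Fintype.card γ :=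
  (ao_le fun U _ => card_le_univ U).antisymm
    (card_le_ao (U := univ) (isChain_of_trichotomous _).isChainUnion)

end AoHeight

section Sum

variable {α β : Type*} [PartialOrder α] [PartialOrder β]

theorem IsChain.toLeft {C : Finset (α ⊕ β)} (hC : IsChain (· ≤ ·) (C : Set (α ⊕ β))) :
    IsChain (· ≤ ·) (C.toLeft : Set α) :=
  fun x hx y hy hne => by
    simpa using hC (mem_toLeft.1 hx) (mem_toLeft.1 hy) (by simpa using hne)

theorem IsChain.toRight {C : Finset (α ⊕ β)} (hC : IsChain (· ≤ ·) (C : Set (α ⊕ β))) :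
    IsChain (· ≤ ·) (C.toRight : Set β) :=
  fun x hx y hy hne => by
    simpa using hC (mem_toRight.1 hx) (mem_toRight.1 hy) (by simpa using hne)

theorem IsChainUnion.preimage {U : Finset β} (hU : IsChainUnion U) (f : α ↪o β) :
    IsChainUnion (U.preimage f f.injective.injOn) :=
  (isChainUnion_map_iff f).1 (hU.mono (map_subset_iff_subset_preimage.2 subset_rfl))

def OrderEmbedding.sumLexInl (α β : Type*) [PartialOrder α] [PartialOrder β] : α ↪o α ⊕ₗ β :=
  .ofMapLEIff (fun a => toLex (.inl a)) fun _ _ => Sum.Lex.inl_le_inl_iff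

def OrderEmbedding.sumLexInr (α β : Type*) [PartialOrder α] [PartialOrder β] : β ↪o α ⊕ₗ β :=
  .ofMapLEIff (fun b => toLex (.inr b)) fun _ _ => Sum.Lex.inr_le_inr_iff

theorem VFree.sumLex {γ : Type*} [LinearOrder γ] (hα : VFree α) : VFree (α ⊕ₗ γ) := by
  rintro ⟨p₁, p₂, p₃, h₁₂, h₁₃, h⟩
  obtain ⟨p₁ | p₁, rfl⟩ := toLex.surjective p₁ <;>
  obtain ⟨p₂ | p₂, rfl⟩ := toLex.surjective p₂ <;>
  obtain ⟨p₃ | p₃, rfl⟩ := toLex.surjective p₃ <;> simp_all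
  · exact hα ⟨p₁, p₂, p₃, h₁₂, h₁₃, by simpa using h⟩
  all_goals exact h.1.asymm h.2

variable [Fintype α] [Fintype β]

theorem ao_sum : ao (α ⊕ β) = ao α + ao β := by
  apply le_antisymm
  · refine ao_le fun U hU => ?_
    rw [← toLeft_disjSum_toRight (u := U), isChainUnion_disjSum_iff] at hU
    rw [← card_toLeft_add_card_toRight]
    exact add_le_add (card_le_ao hU.1) (card_le_ao hU.2)
  · obtain ⟨s, hs, hs'⟩ := exists_isChainUnion_card_eq_ao (α := α)
    obtain ⟨t, ht, ht'⟩ := exists_isChainUnion_card_eq_ao (α := β)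
    rw [← hs', ← ht', ← card_disjSum]
    exact card_le_ao (isChainUnion_disjSum_iff.2 ⟨hs, ht⟩)

theorem heightP_sum_le : heightP (α ⊕ β) ≤ max (heightP α) (heightP β) := by
  refine heightP_le fun C hC => ?_
  have hside : C.toLeft = ∅ ∨ C.toRight = ∅ := by
    by_contra! h
    obtain ⟨⟨a, ha⟩, b, hb⟩ := h
    simpa using hC.total (mem_toLeft.1 ha) (mem_toRight.1 hb)
  have hl := card_le_heightP hC.toLeft
  have hr := card_le_heightP hC.toRight
  rw [← card_toLeft_add_card_toRight]
  rcases hside with h | h <;> simp only [h, card_empty] at hl hr ⊢ <;> omega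

theorem heightP_sumLex_le : heightP (α ⊕ₗ β) ≤ heightP α + heightP β := by
  classical
  refine heightP_le fun C hC => ?_
  set f := OrderEmbedding.sumLexInl α β
  set g := OrderEmbedding.sumLexInr α β
  have hsub : C ⊆ (C.preimage f f.injective.injOn).map f.toEmbedding ∪
      (C.preimage g g.injective.injOn).map g.toEmbedding := by
    intro x hx
    obtain ⟨a | b, rfl⟩ := toLex.surjective x
    · exact mem_union_left _ (mem_map_of_mem _ (mem_preimage.2 hx))
    · exact mem_union_right _ (mem_map_of_mem _ (mem_preimage.2 hx))
  calc #C ≤ _ := card_le_card hsub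
    _ ≤ _ := card_union_le _ _
    _ ≤ heightP α + heightP β := by
      rw [card_map, card_map]
      exact add_le_add (card_le_heightP (by simpa using hC.preimage_embedding f))
        (card_le_heightP (by simpa using hC.preimage_embedding g))

theorem ao_sumLex_le {γ : Type*} [Fintype γ] [LinearOrder γ] :
    ao (α ⊕ₗ γ) ≤ max (heightP (α ⊕ₗ γ)) (ao α) := by
  refine ao_le fun U hU => ?_
  by_cases hr : ∃ c, toLex (.inr c) ∈ U
  · obtain ⟨c, hc⟩ := hr
    refine le_max_of_le_left (card_le_heightP (hU.isChain_of_comparable hc fun x _ => ?_))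
    obtain ⟨a | b, rfl⟩ := toLex.surjective x
    · exact Or.inl (Sum.Lex.inl_le_inr _ _)
    · exact (le_total b c).imp Sum.Lex.inr_le_inr_iff.2 Sum.Lex.inr_le_inr_iff.2
  · push Not at hr
    set f := OrderEmbedding.sumLexInl α γ
    have hsub : U ⊆ (U.preimage f f.injective.injOn).map f.toEmbedding := by
      intro x hx
      obtain ⟨a | b, rfl⟩ := toLex.surjective x
      · exact mem_map_of_mem _ (mem_preimage.2 hx)
      · exact absurd hx (hr b)
    refine le_max_of_le_right ((card_le_card hsub).trans ?_)
    rw [card_map]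
    exact card_le_ao (hU.preimage f)

end Sum

section UpperBound

variable {α : Type*} [PartialOrder α]

def OrderIso.sumComplOfIncomparable (p : α → Prop) [DecidablePred p]
    (h : ∀ x y, p x → ¬p y → ¬(x ≤ y ∨ y ≤ x)) : {x // p x} ⊕ {x // ¬p x} ≃o α where
  toEquiv := Equiv.sumCompl p
  map_rel_iff' := by
    rintro (⟨x, hx⟩ | ⟨x, hx⟩) (⟨y, hy⟩ | ⟨y, hy⟩)
    · simp
    · simpa using fun hxy => h x y hx hy (.inl hxy)
    · simpa using fun hxy => h y x hy hx (.inr hxy)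
    · simp

variable [Fintype α]

theorem heightP_subtype_ne_add_one_le {m : α} (hm : ∀ x, x ≤ m) [Fintype {x // x ≠ m}] :
    heightP {x // x ≠ m} + 1 ≤ heightP α := by
  classical
  obtain ⟨C, hC, hcard⟩ := exists_isChain_card_eq_heightP (α := {x // x ≠ m})
  let f := OrderEmbedding.subtype (· ≠ m)
  have hm' : m ∉ C.map f.toEmbedding := by simp [f]
  have hchain : IsChain (· ≤ ·) ((insert m (C.map f.toEmbedding) : Finset α) : Set α) := by
    rw [coe_insert]
    exact (by simpa using hC.image f : IsChain (· ≤ ·) _).insert fun b _ _ => .inr (hm b)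
  simpa [card_insert_of_notMem hm', hcard] using card_le_heightP hchain

theorem VFree.card_le_onesBelow_ao_add_heightP (hV : VFree α) :
    Fintype.card α ≤ onesBelow (ao α) + heightP α := by
  induction hn : Fintype.card α using Nat.strong_induction_on generalizing α with
  | _ n ih =>
  classical
  rcases isEmpty_or_nonempty α with hα | hα
  · simp [← hn]
  obtain ⟨m, -, hmax⟩ := (univ : Finset α).exists_le_maximal (mem_univ (Classical.arbitrary α))
  have hm : IsMax m := fun x hx => hmax.2 (mem_univ x) hx
  by_cases htop : ∀ x, x ≤ m
  · have hcard : Fintype.card {x // x ≠ m} + 1 = n := by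
      rw [← hn, Fintype.card_subtype_compl, Fintype.card_subtype_eq]
      have := Fintype.card_pos (α := α)
      omega
    have ih' := ih (Fintype.card {x // x ≠ m}) (by omega)
      (hV.of_orderEmbedding (OrderEmbedding.subtype _)) rfl
    have hao := onesBelow_mono (ao_le_of_orderEmbedding (OrderEmbedding.subtype (· ≠ m)))
    have hheight := heightP_subtype_ne_add_one_le htop
    omega
  · push Not at htop
    obtain ⟨y, hy⟩ := htop
    set A := {x // x ≤ m}
    set B := {x // ¬x ≤ m}
    let e := OrderIso.sumComplOfIncomparable (· ≤ m) fun _ _ => hV.not_comparable_of_isMax hm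
    have hcard : Fintype.card A + Fintype.card B = n := by
      rw [← hn, ← Fintype.card_sum, Fintype.card_congr e.toEquiv]
    have hA : 0 < Fintype.card A := Fintype.card_pos_iff.2 ⟨⟨m, le_rfl⟩⟩
    have hB : 0 < Fintype.card B := Fintype.card_pos_iff.2 ⟨⟨y, hy⟩⟩
    have hao : ao α = ao A + ao B := (ao_congr e).symm.trans ao_sum
    have ihA := ih (Fintype.card A) (by omega) (hV.of_orderEmbedding (OrderEmbedding.subtype _)) rfl
    have ihB := ih (Fintype.card B) (by omega) (hV.of_orderEmbedding (OrderEmbedding.subtype _)) rfl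
    have hsuper := onesBelow_add_min_le (ao A) (ao B)
    have hhA_ao := heightP_le_ao (α := A)
    have hhB_ao := heightP_le_ao (α := B)
    have hhA : heightP A ≤ heightP α := heightP_le_of_orderEmbedding (OrderEmbedding.subtype _)
    have hhB : heightP B ≤ heightP α := heightP_le_of_orderEmbedding (OrderEmbedding.subtype _)
    rw [hao]
    omega

theorem VFree.card_le_ao_add_onesBelow (hV : VFree α) :
    Fintype.card α ≤ ao α + onesBelow (ao α) :=
  hV.card_le_onesBelow_ao_add_heightP.trans (by have := heightP_le_ao (α := α); omega)

end UpperBound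

theorem exists_vFree_card_eq_add_onesBelow (a : ℕ) :
    ∃ (γ : Type) (_ : Fintype γ) (_ : PartialOrder γ),
      VFree γ ∧ ao γ = a ∧ heightP γ ≤ a ∧ Fintype.card γ = a + onesBelow a := by
  induction a using Nat.strong_induction_on with
  | _ a ih =>
  rcases Nat.lt_or_ge a 2 with ha | ha
  · refine ⟨Fin a, inferInstance, inferInstance, vFree_of_linearOrder, by simp [ao_eq_card],
      heightP_le_card.trans_eq (Fintype.card_fin a), ?_⟩
    interval_cases a <;> rfl
  obtain ⟨γ₁, _, _, hV₁, hao₁, hh₁, hc₁⟩ := ih ((a + 1) / 2) (by omega)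
  obtain ⟨γ₂, _, _, hV₂, hao₂, hh₂, hc₂⟩ := ih (a / 2) (by omega)
  have hheight : heightP ((γ₁ ⊕ γ₂) ⊕ₗ Fin (a / 2)) ≤ a := by
    have := heightP_sumLex_le (α := γ₁ ⊕ γ₂) (β := Fin (a / 2))
    have := heightP_sum_le (α := γ₁) (β := γ₂)
    have := heightP_le_card (α := Fin (a / 2))
    simp only [Fintype.card_fin] at *
    omega
  have hao : ao (γ₁ ⊕ γ₂) = a := by rw [ao_sum, hao₁, hao₂]; omega
  refine ⟨(γ₁ ⊕ γ₂) ⊕ₗ Fin (a / 2), inferInstance, inferInstance, (hV₁.sum hV₂).sumLex, ?_,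
    hheight, ?_⟩
  · refine le_antisymm (ao_sumLex_le.trans (max_le hheight hao.le)) ?_
    exact hao.symm.le.trans (ao_le_of_orderEmbedding (OrderEmbedding.sumLexInl _ _))
  · rw [Fintype.card_lex, Fintype.card_sum, Fintype.card_sum, hc₁, hc₂, Fintype.card_fin,
      onesBelow_eq_halves a]
    omega

theorem Lambda_eq_add_onesBelow (a : ℕ) : Lambda a = a + onesBelow a := by
  have hub : a + onesBelow a ∈ upperBounds {n | ∃ P : PartialOrder (Fin n), @VFree (Fin n) P ∧
      @ao (Fin n) (Fin.fintype n) P = a ∧ @heightP (Fin n) (Fin.fintype n) P ≤ a} := by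
    rintro n ⟨P, hV, rfl, -⟩
    simpa using hV.card_le_ao_add_onesBelow
  refine le_antisymm (csSup_le' hub) (le_csSup ⟨_, hub⟩ ?_)
  obtain ⟨γ, _, _, hV, hao, hh, hcard⟩ := exists_vFree_card_eq_add_onesBelow a
  rw [← hcard]
  let e : Fin (Fintype.card γ) ≃ γ := (Fintype.equivFin γ).symm
  -- `Fin` already carries an order, so the transported order `P` has to be passed explicitly
  let P : PartialOrder (Fin (Fintype.card γ)) := PartialOrder.lift e e.injective
  let f : @OrderIso (Fin (Fintype.card γ)) γ P.toLE _ := ⟨e, Iff.rfl⟩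
  exact ⟨P, hV.of_orderEmbedding (@OrderIso.toOrderEmbedding _ _ P.toLE _ f),
    (ao_congr f).trans hao, (heightP_congr f).trans_le hh⟩

/-- for `a ≥ 2` and `α = ⌈log₂ a⌉ − 1`,
`Λ(a) = Λ(2^α) + Λ(a − 2^α) + (a − 2^α)`. -/
theorem Lambda_two_power_split (a : ℕ) (ha : 2 ≤ a) :
    Lambda a = Lambda (2 ^ (Nat.clog 2 a - 1)) + Lambda (a - 2 ^ (Nat.clog 2 a - 1))
      + (a - 2 ^ (Nat.clog 2 a - 1)) := by
  set t := Nat.clog 2 a - 1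
  have hlt : 2 ^ t < a := Nat.pow_pred_clog_lt_self one_lt_two ha
  have hle : a ≤ 2 ^ t + 2 ^ t := by
    have hpos : 0 < Nat.clog 2 a := Nat.clog_pos one_lt_two ha
    have := Nat.le_pow_clog one_lt_two a
    rwa [← Nat.sub_add_cancel hpos, pow_succ, mul_two] at this
  have hsplit := onesBelow_two_pow_add t (q := a - 2 ^ t) (by omega)
  rw [Nat.add_sub_cancel' hlt.le] at hsplit
  rw [Lambda_eq_add_onesBelow, Lambda_eq_add_onesBelow, Lambda_eq_add_onesBelow]
  omega
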